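/- Let u_T : ℝⁿ → ℝ be Lipschitz and set u_T^* := S_T^+(S_T^- u_T). Then S_T^- u_T^* = S_T^- u_T, and u_T(x) ≤ u_T^*(x) for all x ∈ ℝⁿ. -/

import Mathlib

/-!
`S_T^-` and `S_T^+` form a Galois connection: `f ≤ S_T^+ g` iff `S_T^- f ≤ g`, since both say
`f x - T L((x - y)/T) ≤ g y` for all `x, y`. Hence `u ≤ S_T^+ S_T^- u` and
`S_T^- S_T^+ S_T^- u = S_T^- u`, as for any Galois connection. The only analytic input is that all
the suprema and infima involved are finite: superlinearity of `H` makes `L(q) ≥ R ‖q‖ - C` for every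
`R`, which dominates the linear growth of a Lipschitz `u` and of everything built from it.
-/

open scoped RealInnerProductSpace
open Filter

noncomputable section

/-- `n`-dimensional Euclidean space. -/
abbrev Euc (n : ℕ) := EuclideanSpace ℝ (Fin n)

/-- A real-valued function on `ℝⁿ` is Lipschitz (with some constant). -/
def IsLip {n : ℕ} (f : Euc n → ℝ) : Prop := ∃ K : NNReal, LipschitzWith K f

/-- The Legendre transform `L(q) = sup_p (⟨q,p⟫ - H(p))`. -/
def legendre {n : ℕ} (H : Euc n → ℝ) (q : Euc n) : ℝ :=
  ⨆ p : Euc n, (⟪q, p⟫ - H p)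

/-- The forward Hopf–Lax operator `(S_T^+ g)(x) = inf_y [g(y) + T·L((x-y)/T)]`. -/
def Splus {n : ℕ} (T : ℝ) (L : Euc n → ℝ) (g : Euc n → ℝ) (x : Euc n) : ℝ :=
  ⨅ y : Euc n, (g y + T * L (T⁻¹ • (x - y)))

/-- The backward operator `(S_T^- g)(x) = sup_y [g(y) - T·L((y-x)/T)]`. -/
def Sminus {n : ℕ} (T : ℝ) (L : Euc n → ℝ) (g : Euc n → ℝ) (x : Euc n) : ℝ :=
  ⨆ y : Euc n, (g y - T * L (T⁻¹ • (y - x)))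

/-- The Hessian of `H` is positive definite at every point. -/
def PosDefHessian {n : ℕ} (H : Euc n → ℝ) : Prop :=
  ∀ p v : Euc n, v ≠ 0 → 0 < iteratedFDeriv ℝ 2 H p ![v, v]

/-- `H` is superlinear: `H(p)/‖p‖ → +∞` as `‖p‖ → +∞`. -/
def Superlinear {n : ℕ} (H : Euc n → ℝ) : Prop :=
  Tendsto (fun p : Euc n => H p / ‖p‖) (cocompact (Euc n)) atTop

namespace Superlinear

variable {n : ℕ} {H : Euc n → ℝ}

theorem exists_mul_norm_sub_le (hc : Continuous H) (hs : Superlinear H) (R : ℝ) :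
    ∃ C, ∀ p, R * ‖p‖ - C ≤ H p := by
  obtain ⟨t, ht, hts⟩ := Filter.mem_cocompact.mp (hs.eventually_ge_atTop R)
  obtain ⟨C, hC⟩ := (ht.insert 0).bddAbove_image (f := fun p => R * ‖p‖ - H p) (by fun_prop)
  refine ⟨max C 0, fun p => ?_⟩
  by_cases hp : p ∈ insert 0 t
  · linarith [hC ⟨p, hp, rfl⟩, le_max_left C 0]
  · have hp0 : 0 < ‖p‖ := norm_pos_iff.mpr fun h => hp (h ▸ Set.mem_insert _ _)
    have hRp : R * ‖p‖ ≤ H p := (le_div_iff₀ hp0).mp (hts fun h => hp (Set.mem_insert_of_mem _ h))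
    linarith [le_max_right C 0]

theorem bddAbove_range_inner_sub (hc : Continuous H) (hs : Superlinear H) (q : Euc n) :
    BddAbove (Set.range fun p => ⟪q, p⟫ - H p) := by
  obtain ⟨C, hC⟩ := hs.exists_mul_norm_sub_le hc ‖q‖
  refine ⟨C, ?_⟩
  rintro _ ⟨p, rfl⟩
  linarith [hC p, real_inner_le_norm q p]

theorem inner_sub_le_legendre (hc : Continuous H) (hs : Superlinear H) (q p : Euc n) :
    ⟪q, p⟫ - H p ≤ legendre H q :=
  le_ciSup (hs.bddAbove_range_inner_sub hc q) p

theorem exists_mul_norm_sub_le_legendre (hc : Continuous H) (hs : Superlinear H) {R : ℝ}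
    (hR : 0 ≤ R) : ∃ C, ∀ q, R * ‖q‖ - C ≤ legendre H q := by
  obtain ⟨C, hC⟩ := (isCompact_closedBall (0 : Euc n) R).bddAbove_image hc.continuousOn
  have hHC : ∀ p : Euc n, ‖p‖ ≤ R → H p ≤ C := fun p hp => hC ⟨p, by simpa using hp, rfl⟩
  refine ⟨C, fun q => ?_⟩
  rcases eq_or_ne q 0 with rfl | hq
  · have h0 := hs.inner_sub_le_legendre hc 0 0
    simp only [inner_zero_left, zero_sub, norm_zero, mul_zero] at h0 ⊢
    linarith [hHC 0 (by simpa)]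
  have hq' : 0 < ‖q‖ := norm_pos_iff.mpr hq
  have hnorm : ‖(R / ‖q‖) • q‖ = R := by
    rw [norm_smul, Real.norm_of_nonneg (by positivity), div_mul_cancel₀ _ hq'.ne']
  have hinner : ⟪q, (R / ‖q‖) • q⟫ = R * ‖q‖ := by
    rw [real_inner_smul_right, real_inner_self_eq_norm_sq]
    field_simp
  linarith [hs.inner_sub_le_legendre hc q ((R / ‖q‖) • q), hHC _ hnorm.le]

end Superlinear

theorem LipschitzWith.le_add_mul_norm_sub {E : Type*} [SeminormedAddCommGroup E] {u : E → ℝ}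
    {K : NNReal} (hu : LipschitzWith K u) (x y : E) : u x ≤ u y + K * ‖x - y‖ :=
  dist_eq_norm x y ▸ hu.le_add_mul x y

theorem mul_norm_sub_le_perspective {n : ℕ} {L : Euc n → ℝ} {R C T : ℝ} (hT : 0 < T)
    (hL : ∀ q, R * ‖q‖ - C ≤ L q) (v : Euc n) : R * ‖v‖ - T * C ≤ T * L (T⁻¹ • v) := by
  have h := mul_le_mul_of_nonneg_left (hL (T⁻¹ • v)) hT.le
  rwa [norm_smul, Real.norm_of_nonneg (inv_nonneg.mpr hT.le), mul_sub, mul_left_comm,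
    ← mul_assoc T, mul_inv_cancel₀ hT.ne', one_mul] at h

namespace HopfLax

open Set

variable {n : ℕ} {T : ℝ} {L : Euc n → ℝ}

theorem sub_le_sminus {f : Euc n → ℝ} {y : Euc n}
    (hb : BddAbove (range fun x => f x - T * L (T⁻¹ • (x - y)))) (x : Euc n) :
    f x - T * L (T⁻¹ • (x - y)) ≤ Sminus T L f y :=
  le_ciSup hb x

theorem splus_le_add {g : Euc n → ℝ} {x : Euc n}
    (hb : BddBelow (range fun y => g y + T * L (T⁻¹ • (x - y)))) (y : Euc n) :
    Splus T L g x ≤ g y + T * L (T⁻¹ • (x - y)) :=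
  ciInf_le hb y

theorem le_splus_sminus {u : Euc n → ℝ}
    (hb : ∀ y, BddAbove (range fun x => u x - T * L (T⁻¹ • (x - y)))) (x : Euc n) :
    u x ≤ Splus T L (Sminus T L u) x :=
  le_ciInf fun y => by linarith [sub_le_sminus (hb y) x]

theorem sminus_splus_le {g : Euc n → ℝ}
    (hb : ∀ x, BddBelow (range fun y => g y + T * L (T⁻¹ • (x - y)))) (y : Euc n) :
    Sminus T L (Splus T L g) y ≤ g y :=
  ciSup_le fun x => by linarith [splus_le_add (hb x) y]

theorem sminus_mono {f₁ f₂ : Euc n → ℝ} (hf : f₁ ≤ f₂)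
    (hb : ∀ y, BddAbove (range fun x => f₂ x - T * L (T⁻¹ • (x - y)))) :
    Sminus T L f₁ ≤ Sminus T L f₂ :=
  fun y => ciSup_mono (hb y) fun x => by linarith [hf x]

theorem sminus_splus_sminus {u : Euc n → ℝ}
    (hu : ∀ y, BddAbove (range fun x => u x - T * L (T⁻¹ • (x - y))))
    (hsu : ∀ x, BddBelow (range fun y => Sminus T L u y + T * L (T⁻¹ • (x - y))))
    (hssu : ∀ y, BddAbove (range fun x => Splus T L (Sminus T L u) x - T * L (T⁻¹ • (x - y)))) :
    Sminus T L (Splus T L (Sminus T L u)) = Sminus T L u :=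
  funext fun y => le_antisymm (sminus_splus_le hsu y) (sminus_mono (le_splus_sminus hu) hssu y)

variable {u : Euc n → ℝ} {K : NNReal} {C : ℝ}

theorem sub_le_of_le_add (hu : LipschitzWith K u)
    (hk : ∀ v, K * ‖v‖ - C ≤ T * L (T⁻¹ • v))
    {f : Euc n → ℝ} {A : ℝ} (hf : ∀ x, f x ≤ u x + A) (x y : Euc n) :
    f x - T * L (T⁻¹ • (x - y)) ≤ u y + A + C := by
  linarith [hf x, hk (x - y), hu.le_add_mul_norm_sub x y]

theorem bddAbove_sminus_family_of_le_add (hu : LipschitzWith K u)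
    (hk : ∀ v, K * ‖v‖ - C ≤ T * L (T⁻¹ • v))
    {f : Euc n → ℝ} {A : ℝ} (hf : ∀ x, f x ≤ u x + A) (y : Euc n) :
    BddAbove (range fun x => f x - T * L (T⁻¹ • (x - y))) :=
  ⟨u y + A + C, by rintro _ ⟨x, rfl⟩; exact sub_le_of_le_add hu hk hf x y⟩

theorem bddBelow_splus_family_of_sub_le (hu : LipschitzWith K u)
    (hk : ∀ v, K * ‖v‖ - C ≤ T * L (T⁻¹ • v))
    {f : Euc n → ℝ} {A : ℝ} (hf : ∀ y, u y - A ≤ f y) (x : Euc n) :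
    BddBelow (range fun y => f y + T * L (T⁻¹ • (x - y))) := by
  refine ⟨u x - A - C, ?_⟩
  rintro _ ⟨y, rfl⟩
  linarith [hf y, hk (x - y), hu.le_add_mul_norm_sub x y]

theorem sminus_le_add (hu : LipschitzWith K u) (hk : ∀ v, K * ‖v‖ - C ≤ T * L (T⁻¹ • v))
    (y : Euc n) : Sminus T L u y ≤ u y + C :=
  ciSup_le fun x => by simpa using sub_le_of_le_add hu hk (A := 0) (by simp) x y

end HopfLax

open HopfLax in
theorem forward_stability
    {n : ℕ} (T : ℝ) (hT : 0 < T)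
    (H : Euc n → ℝ) (hH : ContDiff ℝ 2 H)
    (hHsuper : Superlinear H)
    (uT : Euc n → ℝ) (huT : IsLip uT) :
    Sminus T (legendre H) (Splus T (legendre H) (Sminus T (legendre H) uT)) =
        Sminus T (legendre H) uT ∧
      ∀ x : Euc n, uT x ≤ Splus T (legendre H) (Sminus T (legendre H) uT) x := by
  obtain ⟨K, hu⟩ := huT
  obtain ⟨C, hC⟩ := hHsuper.exists_mul_norm_sub_le_legendre hH.continuous K.2
  have hk := mul_norm_sub_le_perspective hT hC
  have hbu := bddAbove_sminus_family_of_le_add hu hk (f := uT) (A := 0) (by simp)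
  have hsu_ge (y : Euc n) : uT y - T * legendre H 0 ≤ Sminus T (legendre H) uT y := by
    simpa using sub_le_sminus (hbu y) y
  have hbsu := bddBelow_splus_family_of_sub_le hu hk hsu_ge
  have hssu_le (x : Euc n) :
      Splus T (legendre H) (Sminus T (legendre H) uT) x ≤ uT x + (T * C + T * legendre H 0) := by
    have := splus_le_add (hbsu x) x
    simp only [sub_self, smul_zero] at this
    linarith [sminus_le_add hu hk x]
  exact ⟨sminus_splus_sminus hbu hbsu (bddAbove_sminus_family_of_le_add hu hk hssu_le),
    le_splus_sminus hbu⟩
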